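/- Fix i₀ ∈ Fin n and define σ' : (Fin n → ℝ) → (Fin (m+1) → ℝ) by σ'(x) k = σ(x) k for k < m and σ'(x) m = x i₀. If F satisfies condition (C4), then every x ∈ F with σ'(x) ⪰ σ'(δ • x) for all δ ∈ Γ satisfies x i₀ ≥ x (γ⁻¹ i₀) for every γ ∈ Δ; equivalently, x i₀ ≥ x j for every j in the Δ-orbit { γ i₀ | γ ∈ Δ } of i₀. -/
import Mathlib


/-- Action of a permutation of `Fin n` on vectors `x : Fin n → ℝ`:
`(γ • x) i = x (γ⁻¹ i)`. -/
def pact {n : ℕ} (γ : Equiv.Perm (Fin n)) (x : Fin n → ℝ) : Fin n → ℝ :=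
  fun i => x (γ⁻¹ i)

/-- Lexicographic order `u ⪰ v` on `Fin m → ℝ`. -/
def lexGe {m : ℕ} (u v : Fin m → ℝ) : Prop :=
  u = v ∨ ∃ k : Fin m, (∀ i : Fin m, i < k → u i = v i) ∧ v k < u k

/-- The set `W` of solutions respecting the symmetry handling constraints
`σ(x) ⪰ σ(δ • x)` for all `δ ∈ Γ`, where `σ(x) = x ∘ τ`. -/
def Wset (n m : ℕ) (Γ : Subgroup (Equiv.Perm (Fin n))) (τ : Fin m → Fin n) :
    Set (Fin n → ℝ) :=
  {x | ∀ δ ∈ Γ, lexGe (x ∘ τ) (pact δ x ∘ τ)}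

/-- The set `Δ = { γ ∈ Γ | ∀ x ∈ F ∩ W, ∀ k, σ(x) k ≤ σ(γ • x) k }`. -/
def Dset (n m : ℕ) (Γ : Subgroup (Equiv.Perm (Fin n))) (τ : Fin m → Fin n)
    (F : Set (Fin n → ℝ)) : Set (Equiv.Perm (Fin n)) :=
  {γ | γ ∈ Γ ∧ ∀ x ∈ F ∩ Wset n m Γ τ, ∀ k : Fin m, (x ∘ τ) k ≤ (pact γ x ∘ τ) k}

/-- Condition (C4): for every `x ∈ F` and `ξ ∈ Γ` with `σ(x) = σ(ξ • x)`,
also `ξ • x ∈ F`. -/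
def condC4 (n m : ℕ) (Γ : Subgroup (Equiv.Perm (Fin n))) (τ : Fin m → Fin n)
    (F : Set (Fin n → ℝ)) : Prop :=
  ∀ x ∈ F, ∀ ξ ∈ Γ, x ∘ τ = pact ξ x ∘ τ → pact ξ x ∈ F


lemma pact_mul {n : ℕ} (δ γ : Equiv.Perm (Fin n)) (x : Fin n → ℝ) :
    pact (δ * γ) x = pact δ (pact γ x) := by
  funext i; simp [pact]

lemma pact_one {n : ℕ} (x : Fin n → ℝ) : pact 1 x = x := rfl

/-- Orbital symmetry handling: after branching on variable `i₀`, the extended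
symmetry handling constraints (with `σ'` appending coordinate `i₀` to `σ`)
imply `x i₀ ≥ x j` for all `j` in the `Δ`-orbit of `i₀`. -/
theorem stmt10 (n m : ℕ) (Γ : Subgroup (Equiv.Perm (Fin n)))
    (τ : Fin m → Fin n) (hτ : Function.Injective τ)
    (F : Set (Fin n → ℝ)) (i₀ : Fin n)
    (σ' : (Fin n → ℝ) → (Fin (m + 1) → ℝ))
    (hσ' : ∀ (x : Fin n → ℝ) (k : Fin (m + 1)),
      σ' x k = if h : (k : ℕ) < m then x (τ ⟨k, h⟩) else x i₀)
    (hC4 : condC4 n m Γ τ F) :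
    ∀ x ∈ F, (∀ δ ∈ Γ, lexGe (σ' x) (σ' (pact δ x))) →
      (∀ γ ∈ Dset n m Γ τ F, x i₀ ≥ x (γ⁻¹ i₀)) ∧
      (∀ j : Fin n, (∃ γ ∈ Dset n m Γ τ F, γ i₀ = j) → x i₀ ≥ x j) := by
  intro x hxF hx
  -- x ∈ W
  have hxW : x ∈ Wset n m Γ τ := by
    intro δ hδ
    rcases hx δ hδ with heq | ⟨k, hpre, hlt⟩
    · left; funext i
      have := congrFun heq ⟨(i : ℕ), by omega⟩
      simpa [hσ', i.isLt] using this
    · by_cases hk : (k : ℕ) < m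
      · right
        refine ⟨⟨(k : ℕ), hk⟩, ?_, ?_⟩
        · intro i hi
          have hi' : (⟨(i : ℕ), by omega⟩ : Fin (m + 1)) < k := by
            simp only [Fin.lt_def] at hi ⊢; exact hi
          have := hpre ⟨(i : ℕ), by omega⟩ hi'
          simpa [hσ', i.isLt] using this
        · have := hlt
          rw [hσ', hσ'] at this
          simpa [hk] using this
      · left; funext i
        have hi' : (⟨(i : ℕ), by omega⟩ : Fin (m + 1)) < k := by
          simp only [Fin.lt_def]; omega
        have := hpre ⟨(i : ℕ), by omega⟩ hi'
        simpa [hσ', i.isLt] using this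
  -- one step
  have step : ∀ γ ∈ Dset n m Γ τ F, ∀ y, y ∈ F → y ∈ Wset n m Γ τ →
      y ∘ τ = pact γ y ∘ τ ∧ pact γ y ∈ F ∧ pact γ y ∈ Wset n m Γ τ := by
    intro γ hγ y hyF hyW
    have hγΓ := hγ.1
    have hle := hγ.2 y ⟨hyF, hyW⟩
    have heq : y ∘ τ = pact γ y ∘ τ := by
      rcases hyW γ hγΓ with h | ⟨k, _, hlt⟩
      · exact h
      · exact absurd (hle k) (not_le.mpr hlt)
    refine ⟨heq, hC4 y hyF γ hγΓ heq, ?_⟩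
    intro δ hδ
    rw [show pact δ (pact γ y) = pact (δ * γ) y from (pact_mul δ γ y).symm]
    have h2 := hyW (δ * γ) (Γ.mul_mem hδ hγΓ)
    rwa [heq] at h2
  -- iteration
  have iter : ∀ γ ∈ Dset n m Γ τ F, ∀ j : ℕ,
      pact (γ ^ j) x ∈ F ∧ pact (γ ^ j) x ∈ Wset n m Γ τ ∧
        pact (γ ^ j) x ∘ τ = x ∘ τ := by
    intro γ hγ j
    induction j with
    | zero => rw [pow_zero, pact_one]; exact ⟨hxF, hxW, rfl⟩
    | succ j ih =>
      obtain ⟨hF, hW, hτeq⟩ := ih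
      obtain ⟨heq, hF', hW'⟩ := step γ hγ _ hF hW
      have hpow : pact (γ ^ (j + 1)) x = pact γ (pact (γ ^ j) x) := by
        rw [show γ ^ (j + 1) = γ * γ ^ j from pow_succ' γ j, pact_mul]
      rw [hpow]
      exact ⟨hF', hW', by rw [← heq, hτeq]⟩
  -- key consequence of extended constraints
  have key : ∀ η ∈ Γ, pact η x ∘ τ = x ∘ τ → x i₀ ≥ x (η⁻¹ i₀) := by
    intro η hη heq
    rcases hx η hη with h | ⟨k, hpre, hlt⟩
    · have := congrFun h (Fin.last m)
      rw [hσ', hσ'] at this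
      simp only [Fin.val_last, lt_self_iff_false, dif_neg, not_false_iff] at this
      exact this.ge
    · by_cases hk : (k : ℕ) < m
      · exfalso
        have := hlt
        rw [hσ', hσ'] at this
        simp only [hk, dif_pos] at this
        have := congrFun heq (⟨(k : ℕ), hk⟩ : Fin m)
        simp only [Function.comp_apply] at this
        linarith [hlt]
      · have := hlt
        rw [hσ', hσ'] at this
        simp only [hk, dif_neg, not_false_iff] at this
        exact le_of_lt this
  constructor
  · intro γ hγ
    exact key γ hγ.1 (step γ hγ x hxF hxW).1.symm
  · rintro j ⟨γ, hγ, rfl⟩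
    have hpos : 0 < orderOf γ := orderOf_pos γ
    have hinv : γ ^ (orderOf γ - 1) = γ⁻¹ := by
      apply eq_inv_of_mul_eq_one_left
      rw [← pow_succ, Nat.sub_add_cancel hpos, pow_orderOf_eq_one]
    have heq := (iter γ hγ (orderOf γ - 1)).2.2
    rw [hinv] at heq
    have := key γ⁻¹ (Γ.inv_mem hγ.1) heq
    simpa using this
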